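/- For all non-negative integers m and n, the improper integral over t \in (0, \infty) of (1/t) * F_m(1/t) * F_n(t) dt, where F_n(t) := \sum_{k=0}^{n} k! * S(n,k) * (-t)^k / (1+t)^{k+1}, converges and equals the Bernoulli number B_{m+n}. -/

import Mathlib

/-- The Stirling numbers of the second kind `S(n,k)`, the number of ways of
partitioning a set of `n` elements into `k` nonempty sets. -/
def stirling2 : ℕ → ℕ → ℕ
  | 0, 0 => 1
  | 0, _ + 1 => 0
  | _ + 1, 0 => 0
  | n + 1, k + 1 => (k + 1) * stirling2 n (k + 1) + stirling2 n k

/-- The closed form `F n t` of the polylogarithm `Li_{-n}(-t)`. -/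
noncomputable def F (n : ℕ) (t : ℝ) : ℝ :=
  ∑ k ∈ Finset.range (n + 1),
    (Nat.factorial k : ℝ) * (stirling2 n k) * (-t) ^ k / (1 + t) ^ (k + 1)

/-!
With the Fubini polynomials `A n = ∑ k! S(n,k) X^k` one has `F n t = A n (-t/(1+t)) / (1+t)`,
and the substitution `u = t/(1+t)` turns the integral into `∫₀¹ A m (u-1) * A n (-u) du`.
The Stirling recurrence says `A (n+1) = X * ((1+X) * A n)'`, so one integration by parts, whose
boundary terms vanish at `u = 0` and `u = 1`, trades `(m, n+1)` for `(m+1, n)`. Hence the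
integral is `∫₀¹ A (m+n) (-u) du = ∑ (-1)^k k! S(m+n,k) / (k+1)`, the classical formula for
`B (m+n)` in terms of Stirling numbers; it holds because its right-hand side satisfies the
recurrence `∑_{k<n} C(n,k) B_k = [n = 1]` of the Bernoulli numbers.
-/

open scoped Nat
open Nat (stirlingSecond stirlingSecond_succ_succ stirlingSecond_eq_zero_of_lt)

theorem stirling2_eq_stirlingSecond : stirling2 = stirlingSecond := by
  funext n k
  induction n generalizing k with
  | zero => cases k <;> rfl
  | succ n ih =>
    cases k with
    | zero => rfl
    | succ k => rw [stirling2, stirlingSecond_succ_succ, ih, ih]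

section BernoulliStirling

open Finset

theorem Nat.stirlingSecond_succ_succ_eq_sum_choose (n k : ℕ) :
    stirlingSecond (n + 1) (k + 1) = ∑ i ∈ range (n + 1), n.choose i * stirlingSecond i k := by
  induction n generalizing k with
  | zero => cases k <;> simp [stirlingSecond_succ_succ]
  | succ n ih =>
    have hpascal := sum_choose_succ_mul (R := ℕ) (fun i _ => stirlingSecond i k) n
    simp only [Nat.cast_id] at hpascal
    rw [hpascal, ← ih]
    cases k with
    | zero => simp [Nat.stirlingSecond_one_right]
    | succ k =>
      have h : ∑ i ∈ range (n + 1), n.choose i * stirlingSecond (i + 1) (k + 1) =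
          (k + 1) * ∑ i ∈ range (n + 1), n.choose i * stirlingSecond i (k + 1) +
            ∑ i ∈ range (n + 1), n.choose i * stirlingSecond i k := by
        simp only [stirlingSecond_succ_succ, mul_add, sum_add_distrib, mul_left_comm _ (k + 1),
          ← mul_sum]
      rw [h, ← ih, ← ih, stirlingSecond_succ_succ (n + 1) (k + 1)]
      ring

theorem Nat.sum_neg_one_pow_mul_factorial_mul_stirlingSecond_succ {R : Type*} [CommRing R]
    (n : ℕ) :
    ∑ i ∈ range (n + 1), (-1) ^ i * (i ! : R) * stirlingSecond n (i + 1) =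
      if n = 1 then 1 else 0 := by
  cases n with
  | zero => simp
  | succ n =>
    set g : ℕ → R := fun i => (-1) ^ i * (i ! : R) * stirlingSecond n i
    have htelescope : ∀ i, (-1) ^ i * (i ! : R) * stirlingSecond (n + 1) (i + 1) =
        g i - g (i + 1) := by
      intro i
      simp only [g, stirlingSecond_succ_succ, Nat.factorial_succ]
      push_cast
      ring
    have htop : g (n + 2) = 0 := by simp [g, stirlingSecond_eq_zero_of_lt (by omega : n < n + 2)]
    simp only [htelescope, sum_range_sub', htop]
    cases n <;> simp [g]

noncomputable def bernoulliStirling (n : ℕ) : ℚ :=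
  ∑ k ∈ range (n + 1), ((-1) ^ k * k ! / (k + 1) * stirlingSecond n k : ℚ)

theorem bernoulliStirling_eq_sum_range_of_le {n N : ℕ} (h : n ≤ N) :
    bernoulliStirling n =
      ∑ k ∈ range (N + 1), ((-1) ^ k * k ! / (k + 1) * stirlingSecond n k : ℚ) := by
  refine sum_subset (range_subset_range.2 (by omega)) fun k _ hk => ?_
  rw [stirlingSecond_eq_zero_of_lt (by simpa using hk), Nat.cast_zero, mul_zero]

theorem sum_range_choose_mul_bernoulliStirling (n : ℕ) :
    ∑ k ∈ range (n + 1), n.choose k * bernoulliStirling k =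
      bernoulliStirling n + if n = 1 then 1 else 0 := by
  calc ∑ k ∈ range (n + 1), n.choose k * bernoulliStirling k
      = ∑ k ∈ range (n + 1), ∑ i ∈ range (n + 1),
          (n.choose k : ℚ) * ((-1) ^ i * i ! / (i + 1) * stirlingSecond k i) := by
        refine sum_congr rfl fun k hk => ?_
        rw [bernoulliStirling_eq_sum_range_of_le (Nat.lt_succ_iff.1 (mem_range.1 hk)), mul_sum]
    _ = ∑ i ∈ range (n + 1), ((-1) ^ i * i ! / (i + 1) : ℚ) *
          ∑ k ∈ range (n + 1), (n.choose k * stirlingSecond k i : ℕ) := by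
        rw [sum_comm]
        refine sum_congr rfl fun i _ => ?_
        push_cast
        rw [mul_sum]
        exact sum_congr rfl fun _ _ => by ring
    _ = ∑ i ∈ range (n + 1), (((-1) ^ i * i ! * stirlingSecond n (i + 1) : ℚ) +
          (-1) ^ i * i ! / (i + 1) * stirlingSecond n i) := by
        refine sum_congr rfl fun i _ => ?_
        rw [← Nat.stirlingSecond_succ_succ_eq_sum_choose, stirlingSecond_succ_succ]
        push_cast
        field_simp
    _ = bernoulliStirling n + if n = 1 then 1 else 0 := by
        rw [sum_add_distrib, Nat.sum_neg_one_pow_mul_factorial_mul_stirlingSecond_succ, add_comm]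
        rfl

theorem bernoulliStirling_eq_bernoulli (n : ℕ) : bernoulliStirling n = bernoulli n := by
  induction n using Nat.strong_induction_on with
  | _ n ih =>
    have hrec := sum_range_choose_mul_bernoulliStirling (n + 1)
    rw [sum_range_succ, Nat.choose_self, Nat.cast_one, one_mul, add_comm, add_left_cancel_iff,
      ← sum_bernoulli, sum_range_succ, sum_range_succ,
      sum_congr rfl fun k hk => by rw [ih k (mem_range.1 hk)], add_left_cancel_iff] at hrec
    exact mul_left_cancel₀ (by rw [Nat.choose_succ_self_right]; positivity) hrec

end BernoulliStirling

namespace Polynomial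

open Finset

noncomputable def fubiniPoly (R : Type*) [Semiring R] (n : ℕ) : R[X] :=
  ∑ k ∈ range (n + 1), C ((k ! * stirlingSecond n k : ℕ) : R) * X ^ k

variable {R : Type*}

theorem coeff_fubiniPoly [Semiring R] (n k : ℕ) :
    (fubiniPoly R n).coeff k = (k ! * stirlingSecond n k : ℕ) := by
  simp only [fubiniPoly, finsetSum_coeff, coeff_C_mul_X_pow, sum_ite_eq, mem_range]
  split_ifs with hk
  · rfl
  · rw [stirlingSecond_eq_zero_of_lt (by omega), mul_zero, Nat.cast_zero]

theorem fubiniPoly_zero [Semiring R] : fubiniPoly R 0 = 1 := by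
  simp [fubiniPoly]

theorem fubiniPoly_succ [CommSemiring R] (n : ℕ) :
    fubiniPoly R (n + 1) = X * derivative ((1 + X) * fubiniPoly R n) := by
  ext (_ | k)
  · simp [coeff_fubiniPoly]
  · rw [coeff_X_mul, coeff_derivative, add_mul, one_mul, coeff_add, coeff_X_mul, coeff_fubiniPoly,
      coeff_fubiniPoly, coeff_fubiniPoly, stirlingSecond_succ_succ, Nat.factorial_succ]
    push_cast
    ring

theorem comp_mul_comp_sub_eq_derivative [CommRing R] (p q : R[X]) :
    p.comp (X - 1) * (X * derivative ((1 + X) * q)).comp (-X) -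
        (X * derivative ((1 + X) * p)).comp (X - 1) * q.comp (-X) =
      derivative (X * p.comp (X - 1) * ((1 - X) * q.comp (-X))) := by
  have hp : X * p.comp (X - 1) = ((1 + X) * p).comp (X - 1) := by simp [mul_comp]
  have hq : (1 - X) * q.comp (-X) = ((1 + X) * q).comp (-X) := by simp [mul_comp, sub_eq_add_neg]
  rw [hp, hq]
  conv_rhs => rw [derivative_mul, derivative_comp, derivative_comp]
  simp only [mul_comp, add_comp, one_comp, X_comp, derivative_sub, derivative_X, derivative_one,
    derivative_neg]
  ring

theorem integral_eval_derivative (p : ℝ[X]) (a b : ℝ) :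
    ∫ x in a..b, (derivative p).eval x = p.eval b - p.eval a :=
  intervalIntegral.integral_eq_sub_of_hasDerivAt (fun x _ => p.hasDerivAt x)
    (p.derivative.continuous.intervalIntegrable a b)

end Polynomial

section FubiniIntegral

open Finset Polynomial

theorem F_eq_eval_fubiniPoly (n : ℕ) (t : ℝ) :
    F n t = (fubiniPoly ℝ n).eval (-t / (1 + t)) / (1 + t) := by
  rw [F, fubiniPoly, eval_finsetSum, sum_div, stirling2_eq_stirlingSecond]
  refine sum_congr rfl fun k _ => ?_
  simp only [eval_mul, eval_C, eval_pow, eval_X, Nat.cast_mul]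
  rw [div_pow, pow_succ, ← div_div, mul_div_assoc]

theorem one_div_mul_F_one_div_mul_F (m n : ℕ) {t : ℝ} (ht : 0 < t) :
    1 / t * F m (1 / t) * F n t = ((1 + t) ^ 2)⁻¹ •
      ((fubiniPoly ℝ m).eval (t / (1 + t) - 1) * (fubiniPoly ℝ n).eval (-(t / (1 + t)))) := by
  have h : -(1 / t) / (1 + 1 / t) = t / (1 + t) - 1 := by field_simp; ring
  rw [F_eq_eval_fubiniPoly, F_eq_eval_fubiniPoly, h, neg_div, smul_eq_mul]
  field_simp
  ring

noncomputable def fubiniIntegral (m n : ℕ) : ℝ :=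
  ∫ u in (0 : ℝ)..1, (fubiniPoly ℝ m).eval (u - 1) * (fubiniPoly ℝ n).eval (-u)

theorem fubiniIntegral_succ_right (m n : ℕ) :
    fubiniIntegral m (n + 1) = fubiniIntegral (m + 1) n := by
  have hibp := congrArg (fun p : ℝ[X] => ∫ u in (0 : ℝ)..1, p.eval u)
    (comp_mul_comp_sub_eq_derivative (fubiniPoly ℝ m) (fubiniPoly ℝ n))
  simp only [← fubiniPoly_succ, integral_eval_derivative, eval_sub, eval_mul, eval_comp, eval_X,
    eval_one, eval_neg] at hibp
  rw [intervalIntegral.integral_sub (Continuous.intervalIntegrable (by fun_prop) _ _)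
    (Continuous.intervalIntegrable (by fun_prop) _ _)] at hibp
  simpa [fubiniIntegral, sub_eq_zero] using hibp

theorem fubiniIntegral_eq_fubiniIntegral_zero_add (m n : ℕ) :
    fubiniIntegral m n = fubiniIntegral 0 (m + n) := by
  induction m generalizing n with
  | zero => rw [zero_add]
  | succ m ih => rw [← fubiniIntegral_succ_right, ih, add_right_comm, add_assoc]

theorem fubiniIntegral_zero_left (n : ℕ) : fubiniIntegral 0 n = bernoulliStirling n := by
  rw [fubiniIntegral, fubiniPoly_zero]
  simp only [eval_one, one_mul, fubiniPoly, eval_finsetSum, eval_mul, eval_C, eval_pow, eval_X]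
  rw [intervalIntegral.integral_finsetSum
    fun k _ => Continuous.intervalIntegrable (by fun_prop) _ _, bernoulliStirling]
  push_cast
  refine sum_congr rfl fun k _ => ?_
  have hmonomial : ∀ x : ℝ, (k ! : ℝ) * stirlingSecond n k * (-x) ^ k =
      (-1) ^ k * k ! * stirlingSecond n k * x ^ k := fun x => by ring
  simp_rw [hmonomial, intervalIntegral.integral_const_mul, integral_pow]
  field_simp
  simp

end FubiniIntegral

section ChangeOfVariables

open MeasureTheory Set

variable {E : Type*} [NormedAddCommGroup E] [NormedSpace ℝ E]

theorem hasDerivAt_div_one_add {t : ℝ} (ht : 1 + t ≠ 0) :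
    HasDerivAt (fun t : ℝ => t / (1 + t)) ((1 + t) ^ 2)⁻¹ t :=
  ((hasDerivAt_id' t).div ((hasDerivAt_id' t).const_add 1) ht).congr_deriv (by ring)

theorem injOn_div_one_add : InjOn (fun t : ℝ => t / (1 + t)) (Ioi 0) := by
  intro a (ha : 0 < a) b (hb : 0 < b) h
  rw [div_eq_div_iff (by positivity) (by positivity)] at h
  linarith

theorem image_div_one_add_Ioi : (fun t : ℝ => t / (1 + t)) '' Ioi 0 = Ioo 0 1 := by
  ext u
  constructor
  · rintro ⟨t, ht : 0 < t, rfl⟩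
    exact ⟨by positivity, (div_lt_one (by positivity)).2 (by linarith)⟩
  · rintro ⟨hu0, hu1⟩
    have h1u : 1 - u ≠ 0 := (sub_pos.2 hu1).ne'
    refine ⟨u / (1 - u), div_pos hu0 (sub_pos.2 hu1), ?_⟩
    field_simp
    ring

theorem integrableOn_Ioi_div_one_add_iff {g : ℝ → E} :
    IntegrableOn (fun t => ((1 + t) ^ 2)⁻¹ • g (t / (1 + t))) (Ioi 0) ↔
      IntegrableOn g (Ioo 0 1) := by
  rw [← image_div_one_add_Ioi,
    integrableOn_image_iff_integrableOn_abs_deriv_smul measurableSet_Ioi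
    (fun t (ht : 0 < t) => (hasDerivAt_div_one_add (by positivity)).hasDerivWithinAt)
    injOn_div_one_add]
  simp only [abs_inv, abs_pow, sq_abs]

theorem integral_Ioi_div_one_add (g : ℝ → E) :
    ∫ t in Ioi 0, ((1 + t) ^ 2)⁻¹ • g (t / (1 + t)) = ∫ u in Ioo 0 1, g u := by
  rw [← image_div_one_add_Ioi, integral_image_eq_integral_abs_deriv_smul measurableSet_Ioi
    (fun t (ht : 0 < t) => (hasDerivAt_div_one_add (by positivity)).hasDerivWithinAt)
    injOn_div_one_add]
  simp only [abs_inv, abs_pow, sq_abs]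

end ChangeOfVariables

open MeasureTheory Set

theorem integral_polylog_product_eq_bernoulli (m n : ℕ) :
    MeasureTheory.IntegrableOn (fun t : ℝ => (1 / t) * F m (1 / t) * F n t)
      (Set.Ioi 0) ∧
    ∫ t in Set.Ioi (0 : ℝ), (1 / t) * F m (1 / t) * F n t =
      (bernoulli (m + n) : ℝ) := by
  set g : ℝ → ℝ := fun u =>
    (Polynomial.fubiniPoly ℝ m).eval (u - 1) * (Polynomial.fubiniPoly ℝ n).eval (-u)
  have hsubst : EqOn (fun t : ℝ => 1 / t * F m (1 / t) * F n t)
      (fun t => ((1 + t) ^ 2)⁻¹ • g (t / (1 + t))) (Ioi 0) :=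
    fun t ht => one_div_mul_F_one_div_mul_F m n ht
  have hg : IntegrableOn g (Ioo 0 1) :=
    (Continuous.integrableOn_Icc (by fun_prop)).mono_set Ioo_subset_Icc_self
  refine ⟨(integrableOn_congr_fun hsubst measurableSet_Ioi).2
    (integrableOn_Ioi_div_one_add_iff.2 hg), ?_⟩
  rw [setIntegral_congr_fun measurableSet_Ioi hsubst, integral_Ioi_div_one_add,
    ← integral_Ioc_eq_integral_Ioo, ← intervalIntegral.integral_of_le zero_le_one]
  change fubiniIntegral m n = _
  rw [fubiniIntegral_eq_fubiniIntegral_zero_add, fubiniIntegral_zero_left,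
    bernoulliStirling_eq_bernoulli]
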